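/- Let (ψ, F, Q, Q₂, Q₂₂) be a solution on [0, T] of the backward ODE system (for some terminal value w ∈ ℝ) with F(t) > 0 for all t ∈ [0, T]. Then the function G(t) := (I/a)·log F(t) + I·Q(t) + L·Q₂(t) + (1/2)·Q₂₂(t)·ψ(t) satisfies G'(t) = G(t)/F(t) on [0, T] and G(T) = 0; consequently G(t) = 0 for all t ∈ [0, T], i.e., the market-clearing identity 0 = (I/a)·log F(t) + I·Q(t) + L·Q₂(t) + (1/2)·Q₂₂(t)·ψ(t) holds for all t ∈ [0, T]. -/

import Mathlib

/-!
Differentiating `G` along the system, all terms involving `α`, the drifts and the volatilities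
cancel, leaving `G' = G / F`. Since `F` is continuous and positive on the compact interval
`[0, T]`, `1 / F` is bounded there, so `G` solves a linear ODE with Lipschitz right-hand side;
by uniqueness of solutions (Grönwall), the terminal value `G T = 0` forces `G ≡ 0`.
-/

open Set

/-- The backward ODE system of Lemma 1 on `[0,T]` with terminal value `w` for `ψ`. -/
def BwdSol (I : ℕ) (L μD μY ρ δ σY T a σD α w : ℝ)
    (ψ F Q Q2 Q22 : ℝ → ℝ) : Prop :=
  ψ T = w ∧ F T = 1 ∧ Q T = 0 ∧ Q2 T = 0 ∧ Q22 T = 0 ∧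
    ∀ t ∈ Set.Icc 0 T,
      HasDerivWithinAt ψ (2 * F t * Q22 t / α * (ψ t - L ^ 2 / (I : ℝ))) (Set.Icc 0 T) t ∧
      HasDerivWithinAt F
        (F t * (δ - a ^ 2 * σD ^ 2 / (2 * (I : ℝ)) * ψ t -
          a * (a * (I : ℝ) * σY ^ 2 + 2 * a * L * ρ * σD * σY - 2 * (I : ℝ) * μY - 2 * L * μD) /
            (2 * (I : ℝ))) - 1) (Set.Icc 0 T) t ∧
      HasDerivWithinAt Q
        (-(δ / a) + (a * Q t - Real.log (1 / F t) + 1) / (a * F t) + a * σY ^ 2 / 2 -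
          L ^ 2 * F t * Q22 t ^ 2 / (α * (I : ℝ) ^ 2) - μY) (Set.Icc 0 T) t ∧
      HasDerivWithinAt Q2
        (a * ρ * σD * σY + 2 * L * F t * Q22 t ^ 2 / (α * (I : ℝ)) + Q2 t / F t - μD)
        (Set.Icc 0 T) t ∧
      HasDerivWithinAt Q22 (a * σD ^ 2 - 2 * F t * Q22 t ^ 2 / α + Q22 t / F t) (Set.Icc 0 T) t

theorem eqOn_zero_of_hasDerivWithinAt_mul_of_right_eq_zero {c g : ℝ → ℝ} {a b : ℝ}
    (hc : ContinuousOn c (Icc a b))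
    (hg : ∀ t ∈ Icc a b, HasDerivWithinAt g (c t * g t) (Icc a b) t) (hb : g b = 0) :
    EqOn g 0 (Icc a b) := by
  obtain ⟨C, hC⟩ := isCompact_Icc.exists_bound_of_continuousOn hc
  have hg_left (t : ℝ) (ht : t ∈ Ioc a b) : HasDerivWithinAt g (c t * g t) (Iic t) t :=
    (hg t (Ioc_subset_Icc_self ht)).mono_of_mem_nhdsWithin (Icc_mem_nhdsLE_of_mem ht)
  refine ODE_solution_unique_of_mem_Icc_left (v := fun t x ↦ c t * x) (s := fun _ ↦ univ)
    (K := C.toNNReal) (fun t ht ↦ ?_) (fun t ht ↦ (hg t ht).continuousWithinAt) hg_left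
    (fun _ _ ↦ mem_univ _) continuousOn_const (fun t _ ↦ ?_) (fun _ _ ↦ mem_univ _) hb
  · exact ((lipschitzWith_smul (c t)).weaken
      (NNReal.le_toNNReal_of_coe_le (hC t (Ioc_subset_Icc_self ht)))).lipschitzOnWith
  · simpa only [Pi.zero_apply, mul_zero] using hasDerivWithinAt_zero (F := ℝ) t (Iic t)

noncomputable def marketClearingGap (I : ℕ) (L a : ℝ) (ψ F Q Q2 Q22 : ℝ → ℝ) (t : ℝ) : ℝ :=
  (I : ℝ) / a * Real.log (F t) + (I : ℝ) * Q t + L * Q2 t + 1 / 2 * Q22 t * ψ t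

namespace BwdSol

variable {I : ℕ} {L μD μY ρ δ σY T a σD α w : ℝ} {ψ F Q Q2 Q22 : ℝ → ℝ}

theorem continuousOn_F (hsol : BwdSol I L μD μY ρ δ σY T a σD α w ψ F Q Q2 Q22) :
    ContinuousOn F (Icc 0 T) :=
  fun t ht ↦ (hsol.2.2.2.2.2 t ht).2.1.continuousWithinAt

theorem marketClearingGap_terminal (hsol : BwdSol I L μD μY ρ δ σY T a σD α w ψ F Q Q2 Q22) :
    marketClearingGap I L a ψ F Q Q2 Q22 T = 0 := by
  obtain ⟨-, hFT, hQT, hQ2T, hQ22T, -⟩ := hsol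
  simp [marketClearingGap, hFT, hQT, hQ2T, hQ22T]

theorem hasDerivWithinAt_marketClearingGap
    (hsol : BwdSol I L μD μY ρ δ σY T a σD α w ψ F Q Q2 Q22) (hI : I ≠ 0) (ha : a ≠ 0)
    {t : ℝ} (ht : t ∈ Icc 0 T) (hFt : F t ≠ 0) :
    HasDerivWithinAt (marketClearingGap I L a ψ F Q Q2 Q22)
      (marketClearingGap I L a ψ F Q Q2 Q22 t / F t) (Icc 0 T) t := by
  obtain ⟨hψ, hF, hQ, hQ2, hQ22⟩ := hsol.2.2.2.2.2 t ht
  refine (((((hF.log hFt).const_mul ((I : ℝ) / a)).add (hQ.const_mul (I : ℝ))).add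
    (hQ2.const_mul L)).add ((hQ22.const_mul (1 / 2 : ℝ)).mul hψ)).congr_deriv ?_
  have hI' : (I : ℝ) ≠ 0 := Nat.cast_ne_zero.2 hI
  rw [one_div (F t), Real.log_inv]
  unfold marketClearingGap
  field_simp
  ring

end BwdSol

theorem stmt19_general (I : ℕ) (hI : 1 ≤ I) (L μD μY ρ δ σY T a σD α : ℝ)
    (ha : 0 < a)
    (w : ℝ) (ψ F Q Q2 Q22 : ℝ → ℝ)
    (hsol : BwdSol I L μD μY ρ δ σY T a σD α w ψ F Q Q2 Q22)
    (hFpos : ∀ t ∈ Set.Icc (0 : ℝ) T, 0 < F t)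
    (G : ℝ → ℝ)
    (hG : ∀ t, G t = (I : ℝ) / a * Real.log (F t) + (I : ℝ) * Q t + L * Q2 t +
      1 / 2 * Q22 t * ψ t) :
    (∀ t ∈ Set.Icc (0 : ℝ) T, HasDerivWithinAt G (G t / F t) (Set.Icc 0 T) t) ∧
    G T = 0 ∧
    ∀ t ∈ Set.Icc (0 : ℝ) T, G t = 0 := by
  obtain rfl : G = marketClearingGap I L a ψ F Q Q2 Q22 := funext hG
  have hderiv (t : ℝ) (ht : t ∈ Icc 0 T) :
      HasDerivWithinAt (marketClearingGap I L a ψ F Q Q2 Q22)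
        (marketClearingGap I L a ψ F Q Q2 Q22 t / F t) (Icc 0 T) t :=
    hsol.hasDerivWithinAt_marketClearingGap (Nat.one_le_iff_ne_zero.1 hI) ha.ne' ht
      (hFpos t ht).ne'
  refine ⟨hderiv, hsol.marketClearingGap_terminal, ?_⟩
  refine eqOn_zero_of_hasDerivWithinAt_mul_of_right_eq_zero (c := fun t ↦ (F t)⁻¹)
    (hsol.continuousOn_F.inv₀ fun t ht ↦ (hFpos t ht).ne') (fun t ht ↦ ?_)
    hsol.marketClearingGap_terminal
  simpa only [div_eq_inv_mul] using hderiv t ht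

/-- market clearing.  If `(ψ,F,Q,Q₂,Q₂₂)` solves the backward ODE system on
`[0,T]` (for some terminal value `w`) with `F > 0`, then
`G(t) = (I/a)·log F(t) + I·Q(t) + L·Q₂(t) + ½·Q₂₂(t)·ψ(t)` satisfies `G' = G/F`, `G(T) = 0`,
and hence `G ≡ 0` on `[0,T]`. -/
theorem stmt19 (I : ℕ) (hI : 1 ≤ I) (L μD μY ρ δ σY T a σD α : ℝ)
    (hρ : ρ ∈ Set.Icc (-1 : ℝ) 1) (hδ : 0 ≤ δ) (hσY : 0 ≤ σY)
    (hT : 0 < T) (ha : 0 < a) (hσD : 0 < σD) (hα : 0 < α)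
    (w : ℝ) (ψ F Q Q2 Q22 : ℝ → ℝ)
    (hsol : BwdSol I L μD μY ρ δ σY T a σD α w ψ F Q Q2 Q22)
    (hFpos : ∀ t ∈ Set.Icc (0 : ℝ) T, 0 < F t)
    (G : ℝ → ℝ)
    (hG : ∀ t, G t = (I : ℝ) / a * Real.log (F t) + (I : ℝ) * Q t + L * Q2 t +
      1 / 2 * Q22 t * ψ t) :
    (∀ t ∈ Set.Icc (0 : ℝ) T, HasDerivWithinAt G (G t / F t) (Set.Icc 0 T) t) ∧
    G T = 0 ∧
    ∀ t ∈ Set.Icc (0 : ℝ) T, G t = 0 :=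
  stmt19_general I hI L μD μY ρ δ σY T a σD α ha w ψ F Q Q2 Q22 hsol hFpos G hG
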